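/- Let x ∈ Mₙ(ℂ) be regular, i.e., its minimal polynomial has degree n. Then {y ∈ Mₙ(ℂ) : tr(x^k · y) = 0 for all 0 ≤ k ≤ n − 1} = {g·x − x·g : g ∈ Mₙ(ℂ)}; that is, the common kernel of the differentials of the conjugation-invariant trace functions at x is exactly the tangent space to the conjugation orbit of x. -/

import Mathlib

/-! The trace form `(a, b) ↦ tr (a b)` on matrices is nondegenerate, and
`tr ((g x - x g) z) = tr (g (x z - z x))`, so the orthogonal of the orbit tangent space
`{g x - x g}` is the centralizer of `x`; taking orthogonals once more, the tangent space is the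
orthogonal of the centralizer. For regular `x` the centralizer is `ℂ[x]`, which is spanned by
`1, x, …, x ^ (n - 1)`, because `x` has a cyclic vector: over an infinite field some `v` avoids
the finitely many proper subspaces `ker ((m /ₘ (X - C a)) (x))`, `a` a root of the minimal
polynomial `m`, and over an algebraically closed field such a `v` is killed by no proper
divisor of `m`. -/

open Polynomial

namespace Module.End

variable {K V : Type*} [Field K] [AddCommGroup V] [Module K V]

def IsCyclicVector (f : Module.End K V) (v : V) : Prop :=
  Function.Surjective fun p : K[X] ↦ aeval f p v

theorem IsCyclicVector.exists_eq_aeval_of_commute {f g : Module.End K V} {v : V}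
    (hv : f.IsCyclicVector v) (hfg : Commute g f) : ∃ p : K[X], g = aeval f p := by
  obtain ⟨p, hp⟩ := hv (g v)
  refine ⟨p, LinearMap.ext fun w ↦ ?_⟩
  obtain ⟨q, rfl⟩ := hv w
  have hgq : Commute g (aeval f q) :=
    Algebra.commute_of_mem_adjoin_singleton_of_commute (aeval_mem_adjoin_singleton K f) hfg
  have hpq : Commute (aeval f p) (aeval f q) := (Commute.all p q).map (aeval f)
  calc g (aeval f q v) = aeval f q (g v) := LinearMap.congr_fun hgq v
    _ = aeval f p (aeval f q v) := by rw [← hp]; exact LinearMap.congr_fun hpq.symm v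

theorem exists_forall_aeval_divByMonic_apply_ne_zero [Infinite K] (f : Module.End K V) :
    ∃ v : V, ∀ a ∈ (minpoly K f).roots, aeval f (minpoly K f /ₘ (X - C a)) v ≠ 0 := by
  classical
  set m := minpoly K f
  by_contra! hcover
  obtain ⟨⟨a, ha⟩, htop⟩ := Subspace.exists_eq_top_of_iUnion_eq_univ
    (p := fun a : m.roots.toFinset ↦ LinearMap.ker (aeval f (m /ₘ (X - C (a : K)))))
    (Set.eq_univ_of_forall fun v ↦ by
      obtain ⟨a, ha, hv⟩ := hcover v
      exact Set.mem_iUnion.mpr ⟨⟨a, Multiset.mem_toFinset.mpr ha⟩, hv⟩)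
  obtain ⟨hm0, hroot⟩ := mem_roots'.mp (Multiset.mem_toFinset.mp ha)
  have hq0 : m /ₘ (X - C a) ≠ 0 := fun h ↦
    hm0 (by rw [← mul_divByMonic_eq_iff_isRoot.mpr hroot, h, mul_zero])
  have hlt : (m /ₘ (X - C a)).degree < m.degree :=
    degree_divByMonic_lt m _ hm0 (by rw [degree_X_sub_C]; exact zero_lt_one)
  exact (minpoly.degree_le_of_ne_zero K f hq0 (LinearMap.ker_eq_top.mp htop)).not_gt hlt

theorem minpoly_dvd_of_aeval_apply_eq_zero [IsAlgClosed K] [FiniteDimensional K V]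
    {f : Module.End K V} {v : V}
    (hv : ∀ a ∈ (minpoly K f).roots, aeval f (minpoly K f /ₘ (X - C a)) v ≠ 0) {p : K[X]}
    (hp : aeval f p v = 0) : minpoly K f ∣ p := by
  classical
  set m := minpoly K f
  set d := EuclideanDomain.gcd p m
  have hdv : aeval f d v = 0 := by
    simp [d, EuclideanDomain.gcd_eq_gcd_ab, m, hp, mul_comm p, mul_comm m, Module.End.mul_apply]
  obtain ⟨e, he⟩ := EuclideanDomain.gcd_dvd_right p m
  by_cases hunit : IsUnit e
  · rw [he]
    exact (associated_mul_unit_right d e hunit).symm.dvd.trans (EuclideanDomain.gcd_dvd_left p m)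
  obtain ⟨a, hroot⟩ := IsAlgClosed.exists_root e (mt isUnit_iff_degree_eq_zero.mpr hunit)
  obtain ⟨e', rfl⟩ := dvd_iff_isRoot.mpr hroot
  have hm0 : m ≠ 0 := minpoly.ne_zero (Algebra.IsIntegral.isIntegral f)
  have hma : m.IsRoot a := hroot.dvd (he ▸ dvd_mul_left _ d)
  have hquot : m /ₘ (X - C a) = e' * d := by
    apply mul_left_cancel₀ (X_sub_C_ne_zero a)
    rw [mul_divByMonic_eq_iff_isRoot.mpr hma, he]
    ring
  refine absurd ?_ (hv a ((mem_roots hm0).mpr hma))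
  rw [hquot, map_mul, Module.End.mul_apply, hdv, map_zero]

theorem exists_isCyclicVector [IsAlgClosed K] [FiniteDimensional K V] (f : Module.End K V)
    (hf : (minpoly K f).natDegree = finrank K V) : ∃ v : V, f.IsCyclicVector v := by
  set n := finrank K V
  obtain ⟨v, hv⟩ := exists_forall_aeval_divByMonic_apply_ne_zero f
  let φ : degreeLT K n →ₗ[K] V :=
    ((LinearMap.applyₗ v).comp (aeval f).toLinearMap).domRestrict (degreeLT K n)
  have : FiniteDimensional K (degreeLT K n) := (degreeLTEquiv K n).symm.finiteDimensional
  have hφ : Function.Injective φ := by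
    refine (injective_iff_map_eq_zero φ).mpr fun ⟨p, hp⟩ hφp ↦ ?_
    have hm0 : minpoly K f ≠ 0 := minpoly.ne_zero (Algebra.IsIntegral.isIntegral f)
    refine Subtype.ext (eq_zero_of_dvd_of_degree_lt (minpoly_dvd_of_aeval_apply_eq_zero hv hφp) ?_)
    rwa [degree_eq_natDegree hm0, hf, ← mem_degreeLT]
  have hrank : finrank K (degreeLT K n) = n := by simp [(degreeLTEquiv K n).finrank_eq]
  refine ⟨v, fun w ↦ ?_⟩
  obtain ⟨⟨p, _⟩, hp⟩ :=
    (LinearMap.injective_iff_surjective_of_finrank_eq_finrank hrank).mp hφ w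
  exact ⟨p, hp⟩

end Module.End

namespace Matrix

variable {ι K : Type*} [Fintype ι] [DecidableEq ι] [Field K]

def traceForm : LinearMap.BilinForm K (Matrix ι ι K) :=
  (LinearMap.mul K (Matrix ι ι K)).compr₂ (traceLinearMap ι K K)

@[simp]
theorem traceForm_apply (a b : Matrix ι ι K) : traceForm a b = trace (a * b) := rfl

theorem traceForm_isSymm : (traceForm : LinearMap.BilinForm K (Matrix ι ι K)).IsSymm :=
  ⟨fun a b ↦ trace_mul_comm a b⟩

theorem traceForm_nondegenerate :
    (traceForm : LinearMap.BilinForm K (Matrix ι ι K)).Nondegenerate :=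
  ⟨fun a ha ↦ ext_iff_trace_mul_right.mpr fun b ↦ by simpa using ha b,
    fun b hb ↦ ext_iff_trace_mul_left.mpr fun a ↦ by simpa using hb a⟩

theorem traceForm_orthogonal_range_commutator (x : Matrix ι ι K) :
    traceForm.orthogonal (LinearMap.range (LinearMap.mulRight K x - LinearMap.mulLeft K x)) =
      Subalgebra.toSubmodule (Subalgebra.centralizer K {x}) := by
  ext z
  have htrace (g : Matrix ι ι K) : trace ((g * x - x * g) * z) = trace (g * (x * z - z * x)) := by
    rw [sub_mul, mul_sub, trace_sub, trace_sub, ← trace_mul_cycle g z x]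
    simp only [mul_assoc]
  simp only [LinearMap.BilinForm.mem_orthogonal_iff, LinearMap.mem_range, forall_exists_index,
    forall_apply_eq_imp_iff, Subalgebra.mem_toSubmodule, Subalgebra.mem_centralizer_iff,
    Set.mem_singleton_iff, forall_eq, LinearMap.sub_apply, LinearMap.mulRight_apply,
    LinearMap.mulLeft_apply, traceForm_apply, htrace]
  rw [← sub_eq_zero, ext_iff_trace_mul_left]
  simp

theorem range_commutator_eq_orthogonal_centralizer (x : Matrix ι ι K) :
    LinearMap.range (LinearMap.mulRight K x - LinearMap.mulLeft K x) =
      traceForm.orthogonal (Subalgebra.toSubmodule (Subalgebra.centralizer K {x})) := by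
  rw [← traceForm_orthogonal_range_commutator,
    LinearMap.BilinForm.orthogonal_orthogonal traceForm_nondegenerate traceForm_isSymm.isRefl]

theorem exists_eq_aeval_of_commute [IsAlgClosed K] {x z : Matrix ι ι K}
    (hx : (minpoly K x).natDegree = Fintype.card ι) (hz : Commute z x) :
    ∃ p : K[X], z = aeval x p := by
  obtain ⟨v, hv⟩ := Module.End.exists_isCyclicVector (toLinAlgEquiv' x)
    (by rwa [show toLinAlgEquiv' x = toLin' x from rfl, minpoly_toLin',
      Module.finrank_fintype_fun_eq_card])
  obtain ⟨p, hp⟩ := hv.exists_eq_aeval_of_commute (hz.map toLinAlgEquiv')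
  exact ⟨p, toLinAlgEquiv'.injective (by rw [hp, aeval_algEquiv]; rfl)⟩

theorem trace_aeval_mul_eq_zero {x y : Matrix ι ι K} {n : ℕ}
    (hy : ∀ k < n, trace (x ^ k * y) = 0) {p : K[X]} (hp : p.natDegree < n) :
    trace (aeval x p * y) = 0 := by
  rw [aeval_eq_sum_range' hp, Finset.sum_mul, trace_sum]
  exact Finset.sum_eq_zero fun k hk ↦ by
    rw [smul_mul_assoc, trace_smul, hy k (Finset.mem_range.mp hk), smul_zero]

theorem mem_orthogonal_centralizer_iff [IsAlgClosed K] [Nonempty ι] {x : Matrix ι ι K}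
    (hx : (minpoly K x).natDegree = Fintype.card ι) (y : Matrix ι ι K) :
    y ∈ traceForm.orthogonal (Subalgebra.toSubmodule (Subalgebra.centralizer K {x})) ↔
      ∀ k < Fintype.card ι, trace (x ^ k * y) = 0 := by
  simp only [LinearMap.BilinForm.mem_orthogonal_iff, Subalgebra.mem_toSubmodule,
    Subalgebra.mem_centralizer_iff, Set.mem_singleton_iff, forall_eq, traceForm_apply]
  refine ⟨fun hy k _ ↦ hy _ (pow_mul_comm' x k).symm, fun hy z hz ↦ ?_⟩
  obtain ⟨p, rfl⟩ := exists_eq_aeval_of_commute hx hz.symm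
  rw [← aeval_modByMonic_eq_self_of_root (minpoly.aeval K x)]
  exact trace_aeval_mul_eq_zero hy
    (hx ▸ natDegree_modByMonic_lt p (minpoly.monic (isIntegral x)) (minpoly.ne_one K x))

end Matrix

/-- For a regular (non-derogatory) matrix `x ∈ Mₙ(ℂ)` (minimal polynomial of degree `n`),
the common kernel of the trace functionals `y ↦ tr(xᵏ y)`, `0 ≤ k ≤ n - 1`, equals the
tangent space `{g x - x g : g ∈ Mₙ(ℂ)}` to the conjugation orbit of `x`. -/
theorem stmt_9 (n : ℕ) (hn : 1 ≤ n) (x : Matrix (Fin n) (Fin n) ℂ)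
    (hreg : (minpoly ℂ x).natDegree = n) :
    {y : Matrix (Fin n) (Fin n) ℂ | ∀ k : ℕ, k ≤ n - 1 → Matrix.trace (x ^ k * y) = 0} =
      {y : Matrix (Fin n) (Fin n) ℂ |
        ∃ g : Matrix (Fin n) (Fin n) ℂ, y = g * x - x * g} := by
  have : Nonempty (Fin n) := ⟨⟨0, hn⟩⟩
  ext y
  calc (∀ k ≤ n - 1, (x ^ k * y).trace = 0)
        ↔ ∀ k < Fintype.card (Fin n), (x ^ k * y).trace = 0 := by
          simp only [Fintype.card_fin, Nat.le_sub_one_iff_lt hn]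
    _ ↔ y ∈ LinearMap.range (LinearMap.mulRight ℂ x - LinearMap.mulLeft ℂ x) := by
        rw [Matrix.range_commutator_eq_orthogonal_centralizer,
          Matrix.mem_orthogonal_centralizer_iff (by rwa [Fintype.card_fin])]
    _ ↔ ∃ g, y = g * x - x * g := by simp [eq_comm]
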